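/- arXiv:math/0508569 — 6 statements merged into one kernel-verified Lean document; each statement's English description precedes it below -/
import Mathlib

section
/- If $p: \mathbb{C} \to \mathbb{R}$ is a real-valued polynomial function (viewed as a polynomial in $z$ and $\bar z$), then the twist function $T(w,z) = -2\,\mathrm{Im}\left(\sum_{j\ge 1} \frac{1}{j!}\frac{\partial^j p}{\partial z^j}(z)(w-z)^j\right)$ satisfies $T(w,z) = -T(z,w)$ for all $z, w \in \mathbb{C}$. -/
/-!
Write `p(z) = Q(z, z)` with the polarization `Q(w, z) = ∑ a m n w^m z̄^n`. The Taylor series in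
`w` of `p` at `z` with the pure `∂/∂z`-derivatives sums to `Q(w, z)`, so the twist is
`T(w, z) = -2 Im (Q(w, z) - Q(z, z))`. Reality of `p` means `conj Q(w, z) = Q(z, w)`; hence
`Q(z, z)` is real and `Im Q(w, z) = -Im Q(z, w)`, which is the antisymmetry.
-/

open Finset Complex

/-- The coefficient `A_{jk}(z) = (1/(j!k!)) ∂^{j+k}p/∂z^j∂z̄^k (z)` of the
polynomial `p(z) = ∑_{m,n ≤ d} a m n · z^m · z̄^n`. -/
noncomputable def Acoef (d : ℕ) (a : ℕ → ℕ → ℂ) (j k : ℕ) (z : ℂ) : ℂ :=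
  ∑ m ∈ Finset.range (d + 1), ∑ n ∈ Finset.range (d + 1),
    (m.choose j : ℂ) * (n.choose k : ℂ) * a m n * z ^ (m - j) * (starRingEnd ℂ z) ^ (n - k)

/-- The twist `T(w,z) = -2 Im (∑_{j≥1} (1/j!) ∂^j p/∂z^j (z) (w-z)^j)`. -/
noncomputable def Twist (d : ℕ) (a : ℕ → ℕ → ℂ) (w z : ℂ) : ℝ :=
  -2 * (∑ j ∈ Finset.Icc 1 d, Acoef d a j 0 z * (w - z) ^ j).im

/-- `Λ(z,δ) = ∑_{j,k ≥ 1} |A_{jk}(z)| δ^{j+k}`. -/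
noncomputable def Lam (d : ℕ) (a : ℕ → ℕ → ℂ) (z : ℂ) (δ : ℝ) : ℝ :=
  ∑ j ∈ Finset.Icc 1 d, ∑ k ∈ Finset.Icc 1 d,
    ‖Acoef d a j k z‖ * δ ^ (j + k)

/-- `μ(z,δ) = inf_{j,k ≥ 1, A_{jk}(z) ≠ 0} (|δ|/|A_{jk}(z)|)^{1/(j+k)}`. -/
noncomputable def muF (d : ℕ) (a : ℕ → ℕ → ℂ) (z : ℂ) (δ : ℝ) : ℝ :=
  sInf {x : ℝ | ∃ j k : ℕ, 1 ≤ j ∧ 1 ≤ k ∧ Acoef d a j k z ≠ 0 ∧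
    x = (|δ| / ‖Acoef d a j k z‖) ^ (1 / ((j : ℝ) + (k : ℝ)))}

/-- The Wirtinger derivative `∂f/∂z = (1/2)(∂f/∂x - i ∂f/∂y)`. -/
noncomputable def wDz (f : ℂ → ℂ) (z : ℂ) : ℂ :=
  (fderiv ℝ f z 1 - Complex.I * fderiv ℝ f z Complex.I) / 2

/-- The Wirtinger derivative `∂f/∂z̄ = (1/2)(∂f/∂x + i ∂f/∂y)`. -/
noncomputable def wDzbar (f : ℂ → ℂ) (z : ℂ) : ℂ :=
  (fderiv ℝ f z 1 + Complex.I * fderiv ℝ f z Complex.I) / 2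

/-- The nonisotropic pseudodistance `d_{NI}(z,w,t) = |z-w| + μ(z, t+T(w,z))`. -/
noncomputable def dNI (d : ℕ) (a : ℕ → ℕ → ℂ) (z w : ℂ) (t : ℝ) : ℝ :=
  ‖z - w‖ + muF d a z (t + Twist d a w z)

open ComplexConjugate

theorem sum_choose_mul_pow_mul_sub_pow {R : Type*} [CommRing R] {d m : ℕ} (hm : m ≤ d)
    (z w : R) :
    ∑ j ∈ range (d + 1), (m.choose j : R) * z ^ (m - j) * (w - z) ^ j = w ^ m := by
  have hsub : range (m + 1) ⊆ range (d + 1) := range_subset_range.2 (by omega)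
  rw [← sum_subset hsub fun j _ hj => by
    rw [Nat.choose_eq_zero_of_lt (by simpa using hj)]; simp]
  conv_rhs => rw [← sub_add_cancel w z, add_pow]
  exact sum_congr rfl fun j _ => by ring

noncomputable def polarization (d : ℕ) (a : ℕ → ℕ → ℂ) (w z : ℂ) : ℂ :=
  ∑ m ∈ range (d + 1), ∑ n ∈ range (d + 1), a m n * w ^ m * conj z ^ n

theorem Acoef_zero_zero (d : ℕ) (a : ℕ → ℕ → ℂ) (z : ℂ) :
    Acoef d a 0 0 z = polarization d a z z := by
  simp [Acoef, polarization]

theorem sum_Acoef_mul_sub_pow (d : ℕ) (a : ℕ → ℕ → ℂ) (z w : ℂ) :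
    ∑ j ∈ range (d + 1), Acoef d a j 0 z * (w - z) ^ j = polarization d a w z := by
  simp only [Acoef, polarization, sum_mul, Nat.choose_zero_right, Nat.cast_one, Nat.sub_zero]
  rw [sum_comm]
  refine sum_congr rfl fun m hm => ?_
  rw [sum_comm]
  refine sum_congr rfl fun n _ => ?_
  rw [← sum_choose_mul_pow_mul_sub_pow (Nat.lt_succ_iff.mp (mem_range.mp hm)) z w, mul_sum,
    sum_mul]
  exact sum_congr rfl fun j _ => by ring

theorem twist_eq (d : ℕ) (a : ℕ → ℕ → ℂ) (w z : ℂ) :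
    Twist d a w z = -2 * (polarization d a w z - polarization d a z z).im := by
  rw [Twist, ← sum_Acoef_mul_sub_pow d a z w, ← Acoef_zero_zero d a z,
    range_eq_Ico, sum_eq_sum_Ico_succ_bot d.succ_pos, zero_add, Nat.succ_eq_add_one,
    Ico_add_one_right_eq_Icc]
  simp

theorem conj_polarization (d : ℕ) (a : ℕ → ℕ → ℂ)
    (hreal : ∀ m n, conj (a m n) = a n m) (w z : ℂ) :
    conj (polarization d a w z) = polarization d a z w := by
  simp only [polarization, map_sum, map_mul, map_pow, conj_conj, hreal]
  rw [sum_comm]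
  exact sum_congr rfl fun m _ => sum_congr rfl fun n _ => by ring

/-- For a real-valued polynomial `p` in `z` and `z̄` (encoded by coefficients `a`
with the reality condition `conj (a m n) = a n m`), the twist satisfies
`T(w,z) = -T(z,w)`. -/
theorem twist_antisymm (d : ℕ) (a : ℕ → ℕ → ℂ)
    (hreal : ∀ m n, (starRingEnd ℂ) (a m n) = a n m) (z w : ℂ) :
    Twist d a w z = - Twist d a z w := by
  have hswap := conj_polarization d a hreal
  have hdiag (u : ℂ) : (polarization d a u u).im = 0 := conj_eq_iff_im.mp (hswap u u)
  rw [twist_eq, twist_eq, sub_im, sub_im, hdiag, hdiag, ← hswap w z, conj_im]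
  ring
end

section
/- For a real-valued polynomial $p$ in $z$ and $\bar z$, the twist $T(w,z)$ satisfies $\frac{\partial T}{\partial z}(w,z) = -i\frac{\partial p}{\partial z}(z) - i\sum_{j \ge 1}\frac{1}{j!}\frac{\partial^{j+1}p}{\partial z \partial \bar z^j}(z)\,\overline{(w-z)}^j$, where the derivative is the Wirtinger derivative in $z$ with $w$ held fixed. -/
open Finset Complex

open ComplexConjugate

/-!
By the binomial theorem, `∑_{j ≥ 1} A_{j0}(ζ) (w - ζ)^j = ∑ a_{mn} (w^m - ζ^m) ζ̄^n`, a sum of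
products of a holomorphic and an antiholomorphic function of `ζ`. Its real derivative at `z` is
therefore `v ↦ α v + β v̄` with `α = -∂p/∂z(z)`, and since `T = -2 Im` of this sum,
`∂T/∂z = i (α - β̄)`. Reality of `p` (`a_{nm} = ā_{mn}`) and the binomial theorem once more
identify `β̄` with `∑_{j ≥ 1} A_{1j}(z) (w̄ - z̄)^j`.
-/

theorem sum_Icc_choose_mul_pow_mul_pow {R : Type*} [CommRing R] (x y : R) {n d : ℕ}
    (hn : n ≤ d) :
    ∑ j ∈ Icc 1 d, (n.choose j : R) * x ^ (n - j) * y ^ j = (x + y) ^ n - x ^ n := by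
  have hbinom : ∑ j ∈ range (d + 1), (n.choose j : R) * x ^ (n - j) * y ^ j = (x + y) ^ n := by
    rw [add_comm x y, add_pow]
    refine (sum_subset (range_subset_range.2 (Nat.succ_le_succ hn)) fun j _ hj => ?_).symm.trans
      (sum_congr rfl fun j _ => by ring)
    rw [Nat.choose_eq_zero_of_lt (by simpa using hj)]
    simp
  rw [← hbinom, sum_range_eq_add_Ico _ (Nat.succ_pos d), Nat.succ_eq_add_one,
    Ico_add_one_right_eq_Icc]
  simp

/-- Every real-linear endomorphism of `ℂ` is of this form, `α` and `β` being the Wirtinger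
derivatives `∂/∂z` and `∂/∂z̄`. -/
noncomputable def wirtingerCLM (α β : ℂ) : ℂ →L[ℝ] ℂ :=
  α • ContinuousLinearMap.id ℝ ℂ + β • conjCLE.toContinuousLinearMap

section Wirtinger

variable {f : ℂ → ℂ} {α β z : ℂ}

@[simp]
theorem wirtingerCLM_apply (v : ℂ) : wirtingerCLM α β v = α * v + β * conj v := rfl

theorem smul_wirtingerCLM (c : ℂ) : c • wirtingerCLM α β = wirtingerCLM (c * α) (c * β) := by
  ext1 v
  simp only [smul_apply, wirtingerCLM_apply, smul_eq_mul]
  ring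

theorem sum_wirtingerCLM {ι : Type*} (s : Finset ι) (α β : ι → ℂ) :
    ∑ i ∈ s, wirtingerCLM (α i) (β i) = wirtingerCLM (∑ i ∈ s, α i) (∑ i ∈ s, β i) := by
  ext1 v; simp [sum_add_distrib, sum_mul]

theorem wDz_eq_of_hasFDerivAt (hf : HasFDerivAt f (wirtingerCLM α β) z) : wDz f z = α := by
  rw [wDz, hf.fderiv]
  simp only [wirtingerCLM_apply, map_one, mul_one, conj_I]
  linear_combination ((β - α) / 2) * I_mul_I

theorem hasFDerivAt_mul_comp_conj {F G : ℂ → ℂ} {F' G' : ℂ} (hF : HasDerivAt F F' z)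
    (hG : HasDerivAt G G' (conj z)) :
    HasFDerivAt (fun ζ => F ζ * G (conj ζ)) (wirtingerCLM (F' * G (conj z)) (F z * G')) z := by
  have hF' := hF.hasFDerivAt.restrictScalars ℝ
  have hG' := (hG.hasFDerivAt.restrictScalars ℝ).comp z conjCLE.toContinuousLinearMap.hasFDerivAt
  refine (hF'.mul hG').congr_fderiv ?_
  ext1 v
  simp only [Function.comp_apply, add_apply, smul_apply,
    ContinuousLinearMap.comp_apply, ContinuousLinearEquiv.coe_coe, ContinuousAlgEquiv.coeCLE_apply,
    conjCAE_apply, ContinuousLinearMap.coe_restrictScalars',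
    ContinuousLinearMap.toSpanSingleton_apply, smul_eq_mul, wirtingerCLM_apply]
  ring

theorem HasFDerivAt.conj_wirtingerCLM (hf : HasFDerivAt f (wirtingerCLM α β) z) :
    HasFDerivAt (fun ζ => conj (f ζ)) (wirtingerCLM (conj β) (conj α)) z := by
  refine (conjCLE.toContinuousLinearMap.hasFDerivAt.comp z hf).congr_fderiv ?_
  ext1 v
  simp only [ContinuousLinearMap.comp_apply, wirtingerCLM_apply, ContinuousLinearEquiv.coe_coe,
    ContinuousAlgEquiv.coeCLE_apply, conjCAE_apply, map_add, map_mul, conj_conj]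
  ring

theorem HasFDerivAt.ofReal_im_wirtingerCLM (hf : HasFDerivAt f (wirtingerCLM α β) z) :
    HasFDerivAt (fun ζ => ((f ζ).im : ℂ))
      (wirtingerCLM ((α - conj β) / (2 * I)) ((β - conj α) / (2 * I))) z := by
  have him : (fun ζ => ((f ζ).im : ℂ)) = fun ζ => (2 * I)⁻¹ * (f ζ - conj (f ζ)) := by
    funext ζ; rw [im_eq_sub_conj, div_eq_inv_mul]
  rw [him]
  refine ((hf.sub hf.conj_wirtingerCLM).const_mul (2 * I)⁻¹).congr_fderiv ?_
  ext1 v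
  simp only [mul_inv_rev, inv_I, neg_mul, smul_apply,
    sub_apply, wirtingerCLM_apply, smul_eq_mul, div_eq_mul_inv, mul_neg]
  ring

end Wirtinger

section Expansion

variable (d : ℕ) (a : ℕ → ℕ → ℂ)

theorem sum_Acoef_mul_pow (k : ℕ) (w z : ℂ) :
    ∑ j ∈ Icc 1 d, Acoef d a j k z * (w - z) ^ j
      = ∑ m ∈ range (d + 1), ∑ n ∈ range (d + 1),
          (n.choose k : ℂ) * a m n * (w ^ m - z ^ m) * conj z ^ (n - k) := by
  simp only [Acoef, sum_mul]
  rw [sum_comm]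
  refine sum_congr rfl fun m hm => ?_
  rw [sum_comm]
  refine sum_congr rfl fun n _ => ?_
  have hbinom := sum_Icc_choose_mul_pow_mul_pow z (w - z) (Nat.lt_succ_iff.1 (mem_range.1 hm))
  rw [add_sub_cancel] at hbinom
  rw [← hbinom, mul_sum, sum_mul]
  exact sum_congr rfl fun j _ => by ring

theorem sum_Acoef_mul_conj_pow (k : ℕ) (w z : ℂ) :
    ∑ j ∈ Icc 1 d, Acoef d a k j z * conj (w - z) ^ j
      = ∑ m ∈ range (d + 1), ∑ n ∈ range (d + 1),
          (m.choose k : ℂ) * a m n * z ^ (m - k) * (conj w ^ n - conj z ^ n) := by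
  simp only [Acoef, sum_mul]
  rw [sum_comm]
  refine sum_congr rfl fun m _ => ?_
  rw [sum_comm]
  refine sum_congr rfl fun n hn => ?_
  have hbinom := sum_Icc_choose_mul_pow_mul_pow (conj z) (conj (w - z))
    (Nat.lt_succ_iff.1 (mem_range.1 hn))
  rw [map_sub, add_sub_cancel] at hbinom
  rw [← hbinom, mul_sum]
  exact sum_congr rfl fun j _ => by rw [map_sub]; ring

theorem ofReal_Twist (w ζ : ℂ) :
    (Twist d a w ζ : ℂ) = -2 * ((∑ m ∈ range (d + 1), ∑ n ∈ range (d + 1),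
      a m n * (w ^ m - ζ ^ m) * conj ζ ^ n).im : ℂ) := by
  simp [Twist, sum_Acoef_mul_pow]

theorem hasFDerivAt_sum_mul_sub_pow_mul_conj_pow (w z : ℂ) :
    HasFDerivAt (fun ζ => ∑ m ∈ range (d + 1), ∑ n ∈ range (d + 1),
        a m n * (w ^ m - ζ ^ m) * conj ζ ^ n)
      (wirtingerCLM (-Acoef d a 1 0 z) (∑ m ∈ range (d + 1), ∑ n ∈ range (d + 1),
        (n : ℂ) * a m n * (w ^ m - z ^ m) * conj z ^ (n - 1))) z := by
  have hterm (m n : ℕ) : HasFDerivAt (fun ζ => a m n * (w ^ m - ζ ^ m) * conj ζ ^ n)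
      (wirtingerCLM (-((m : ℂ) * a m n * z ^ (m - 1) * conj z ^ n))
        ((n : ℂ) * a m n * (w ^ m - z ^ m) * conj z ^ (n - 1))) z := by
    refine (hasFDerivAt_mul_comp_conj (((hasDerivAt_pow m z).const_sub (w ^ m)).const_mul (a m n))
      (hasDerivAt_pow n (conj z))).congr_fderiv ?_
    congr 1 <;> ring
  have hsum := HasFDerivAt.fun_sum (u := range (d + 1)) fun m _ =>
    HasFDerivAt.fun_sum (u := range (d + 1)) fun n _ => hterm m n
  simp only [sum_wirtingerCLM, sum_neg_distrib] at hsum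
  refine hsum.congr_fderiv (congrArg₂ wirtingerCLM ?_ rfl)
  simp [Acoef]

theorem conj_sum_natCast_mul_sub_pow_mul_conj_pow (hreal : ∀ m n, conj (a m n) = a n m)
    (w z : ℂ) :
    conj (∑ m ∈ range (d + 1), ∑ n ∈ range (d + 1),
        (n : ℂ) * a m n * (w ^ m - z ^ m) * conj z ^ (n - 1))
      = ∑ j ∈ Icc 1 d, Acoef d a 1 j z * conj (w - z) ^ j := by
  rw [sum_Acoef_mul_conj_pow, sum_comm]
  simp only [map_sum, map_mul, map_sub, map_pow, map_natCast, conj_conj, hreal,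
    Nat.choose_one_right]
  exact sum_congr rfl fun m _ => sum_congr rfl fun n _ => by ring

end Expansion

/-- For a real-valued polynomial `p` in `z` and `z̄`, the Wirtinger `z`-derivative of
the twist (with `w` fixed) satisfies
`∂T/∂z (w,z) = -i ∂p/∂z(z) - i ∑_{j≥1} (1/j!) ∂^{j+1}p/∂z∂z̄^j(z) conj(w-z)^j`. -/
theorem twist_deriv_z (d : ℕ) (a : ℕ → ℕ → ℂ)
    (hreal : ∀ m n, (starRingEnd ℂ) (a m n) = a n m) (z w : ℂ) :
    wDz (fun ζ => ((Twist d a w ζ : ℝ) : ℂ)) z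
      = -Complex.I * Acoef d a 1 0 z
        - Complex.I * ∑ j ∈ Finset.Icc 1 d,
            Acoef d a 1 j z * (starRingEnd ℂ (w - z)) ^ j := by
  have hT :=
    (hasFDerivAt_sum_mul_sub_pow_mul_conj_pow d a w z).ofReal_im_wirtingerCLM.const_mul (-2)
  rw [smul_wirtingerCLM, ← funext (ofReal_Twist d a w)] at hT
  rw [wDz_eq_of_hasFDerivAt hT, conj_sum_natCast_mul_sub_pow_mul_conj_pow d a hreal]
  field_simp
  rw [I_sq]
  ring
end

section
/- For a real-valued polynomial $p$ in $z$ and $\bar z$, the twist $T(w,z)$ satisfies $\frac{\partial T}{\partial \bar z}(w,z) = i\frac{\partial p}{\partial \bar z}(z) + i\sum_{j \ge 1}\frac{1}{j!}\frac{\partial^{j+1}p}{\partial z^j \partial \bar z}(z)(w-z)^j$, i.e. $\partial T/\partial \bar z$ is the complex conjugate of $\partial T/\partial z$ since $T$ is real-valued. -/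
/-!
Write `G(ζ) = ∑_{j ≥ 1} A_{j0}(ζ) (w - ζ)^j`, so that `T = i (G - Ḡ)` and
`∂̄T = i (∂̄G - conj ∂G)`. Since `∂A_{jk} = (j+1) A_{j+1,k}` and `∂̄A_{jk} = (k+1) A_{j,k+1}`,
`∂̄G = ∑_{j ≥ 1} A_{j1} (w - z)^j`, while `∂G` telescopes to `-A_{10}`, whose conjugate is
`-A_{01}` because `p` is real. The second identity holds for every real-valued function.
-/

open Finset Complex

open ComplexConjugate

def HasWirtingerDerivAt (f : ℂ → ℂ) (α β z : ℂ) : Prop :=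
  HasFDerivAt f (α • ContinuousLinearMap.id ℝ ℂ + β • (conjCLE : ℂ →L[ℝ] ℂ)) z

namespace HasWirtingerDerivAt

variable {f g : ℂ → ℂ} {α β α' β' z : ℂ}

theorem wDzbar_eq (h : HasWirtingerDerivAt f α β z) : wDzbar f z = β := by
  simp only [wDzbar, h.fderiv, add_apply, smul_apply, ContinuousLinearMap.coe_id', id_eq,
    ContinuousLinearEquiv.coe_coe, conjCLE_apply, map_one, conj_I, smul_eq_mul]
  linear_combination (α - β) / 2 * I_sq

theorem of_hasDerivAt {f' : ℂ} (h : HasDerivAt f f' z) : HasWirtingerDerivAt f f' 0 z := by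
  refine (h.hasFDerivAt.restrictScalars ℝ).congr_fderiv ?_
  ext1 v
  simp [mul_comm]

theorem star (h : HasWirtingerDerivAt f α β z) :
    HasWirtingerDerivAt (fun ζ => conj (f ζ)) (conj β) (conj α) z := by
  unfold HasWirtingerDerivAt at *
  refine ((conjCLE : ℂ ≃L[ℝ] ℂ).hasFDerivAt.comp z h).congr_fderiv ?_
  ext1 v
  simp [add_comm]

theorem sub (hf : HasWirtingerDerivAt f α β z) (hg : HasWirtingerDerivAt g α' β' z) :
    HasWirtingerDerivAt (fun ζ => f ζ - g ζ) (α - α') (β - β') z := by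
  unfold HasWirtingerDerivAt at *
  refine (HasFDerivAt.sub hf hg).congr_fderiv ?_
  ext1 v
  simp only [add_apply, sub_apply, smul_apply, smul_eq_mul]
  ring

theorem mul (hf : HasWirtingerDerivAt f α β z) (hg : HasWirtingerDerivAt g α' β' z) :
    HasWirtingerDerivAt (fun ζ => f ζ * g ζ) (f z * α' + g z * α) (f z * β' + g z * β) z := by
  unfold HasWirtingerDerivAt at *
  refine (HasFDerivAt.fun_mul hf hg).congr_fderiv ?_
  ext1 v
  simp only [add_apply, smul_apply, smul_eq_mul]
  ring

theorem const_mul (h : HasWirtingerDerivAt f α β z) (c : ℂ) :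
    HasWirtingerDerivAt (fun ζ => c * f ζ) (c * α) (c * β) z := by
  unfold HasWirtingerDerivAt at *
  refine (HasFDerivAt.const_mul h c).congr_fderiv ?_
  ext1 v
  simp only [add_apply, smul_apply, smul_eq_mul]
  ring

theorem sum {ι : Type*} (s : Finset ι) {f : ι → ℂ → ℂ} {α β : ι → ℂ}
    (h : ∀ i ∈ s, HasWirtingerDerivAt (f i) (α i) (β i) z) :
    HasWirtingerDerivAt (fun ζ => ∑ i ∈ s, f i ζ) (∑ i ∈ s, α i) (∑ i ∈ s, β i) z := by
  unfold HasWirtingerDerivAt at *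
  refine (HasFDerivAt.fun_sum h).congr_fderiv ?_
  ext1 v
  simp [sum_add_distrib, sum_mul]

end HasWirtingerDerivAt

theorem wDzbar_eq_conj_wDz_of_conj_eq {f : ℂ → ℂ} (hf : ∀ ζ, conj (f ζ) = f ζ) (z : ℂ) :
    wDzbar f z = conj (wDz f z) := by
  have hL : ∀ v, conj (fderiv ℝ f z v) = fderiv ℝ f z v := fun v => by
    have hconj : (conjCLE : ℂ ≃L[ℝ] ℂ) ∘ f = f := funext hf
    conv_rhs => rw [← hconj, ContinuousLinearEquiv.comp_fderiv]
    rfl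
  simp only [wDzbar, wDz, map_div₀, map_sub, map_mul, hL, conj_I, map_ofNat]
  ring

theorem hasWirtingerDerivAt_monomial (p q : ℕ) (z : ℂ) :
    HasWirtingerDerivAt (fun ζ => ζ ^ p * conj ζ ^ q)
      (p * z ^ (p - 1) * conj z ^ q) (z ^ p * (q * conj z ^ (q - 1))) z := by
  have hconj : HasWirtingerDerivAt (fun ζ => conj ζ ^ q) 0 (q * conj z ^ (q - 1)) z := by
    simpa using (HasWirtingerDerivAt.of_hasDerivAt (hasDerivAt_pow q z)).star
  convert (HasWirtingerDerivAt.of_hasDerivAt (hasDerivAt_pow p z)).mul hconj using 1 <;> ring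

section Acoef

variable (d : ℕ) (a : ℕ → ℕ → ℂ)

theorem hasWirtingerDerivAt_Acoef (j k : ℕ) (z : ℂ) :
    HasWirtingerDerivAt (Acoef d a j k) ((j + 1) * Acoef d a (j + 1) k z)
      ((k + 1) * Acoef d a j (k + 1) z) z := by
  have h := HasWirtingerDerivAt.sum (range (d + 1)) fun m _ =>
    HasWirtingerDerivAt.sum (range (d + 1)) fun n _ =>
      (hasWirtingerDerivAt_monomial (m - j) (n - k) z).const_mul
        ((m.choose j : ℂ) * n.choose k * a m n)
  convert h using 1
  · funext ζ
    simp only [Acoef, mul_assoc]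
  all_goals
    simp only [Acoef, mul_sum]
    refine sum_congr rfl fun m _ => sum_congr rfl fun n _ => ?_
    have hm : (m.choose (j + 1) : ℂ) * (j + 1) = m.choose j * (m - j : ℕ) := by
      exact_mod_cast Nat.choose_succ_right_eq m j
    have hn : (n.choose (k + 1) : ℂ) * (k + 1) = n.choose k * (n - k : ℕ) := by
      exact_mod_cast Nat.choose_succ_right_eq n k
  · linear_combination (n.choose k * a m n * z ^ (m - (j + 1)) * conj z ^ (n - k)) * hm
  · linear_combination (m.choose j * a m n * z ^ (m - j) * conj z ^ (n - (k + 1))) * hn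

theorem Acoef_eq_zero_of_lt {j : ℕ} (hj : d < j) (k : ℕ) (z : ℂ) : Acoef d a j k z = 0 := by
  refine sum_eq_zero fun m hm => sum_eq_zero fun n _ => ?_
  rw [Nat.choose_eq_zero_of_lt ((Nat.lt_succ_iff.mp (mem_range.mp hm)).trans_lt hj)]
  simp

theorem conj_Acoef (hreal : ∀ m n, conj (a m n) = a n m) (j k : ℕ) (z : ℂ) :
    conj (Acoef d a j k z) = Acoef d a k j z := by
  simp only [Acoef, map_sum, map_mul, map_pow, map_natCast, conj_conj, hreal]
  rw [sum_comm]
  refine sum_congr rfl fun n _ => sum_congr rfl fun m _ => ?_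
  ring

theorem hasWirtingerDerivAt_taylorSum (w z : ℂ) :
    HasWirtingerDerivAt (fun ζ => ∑ j ∈ Icc 1 d, Acoef d a j 0 ζ * (w - ζ) ^ j)
      (-Acoef d a 1 0 z) (∑ j ∈ Icc 1 d, Acoef d a j 1 z * (w - z) ^ j) z := by
  have h := HasWirtingerDerivAt.sum (Icc 1 d) fun j _ =>
    (hasWirtingerDerivAt_Acoef d a j 0 z).mul
      (HasWirtingerDerivAt.of_hasDerivAt (((hasDerivAt_id' z).const_sub w).fun_pow j))
  convert h using 1
  · obtain rfl | hd := Nat.eq_zero_or_pos d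
    · simp [Acoef_eq_zero_of_lt]
    set v : ℕ → ℂ := fun j => j * Acoef d a j 0 z * (w - z) ^ (j - 1)
    have hv : v (d + 1) = 0 := by simp [v, Acoef_eq_zero_of_lt d a (Nat.lt_succ_self d)]
    calc -Acoef d a 1 0 z = ∑ j ∈ Icc 1 d, (v (j + 1) - v j) := by
          rw [sum_Icc_sub hd, hv]; simp [v]
      _ = _ := by
          refine sum_congr rfl fun j _ => ?_
          simp only [v, Nat.add_sub_cancel, Nat.cast_add, Nat.cast_one]
          ring
  · refine sum_congr rfl fun j _ => ?_
    simp only [mul_zero, CharP.cast_eq_zero, zero_add, one_mul]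
    ring

theorem hasWirtingerDerivAt_twist (w z : ℂ) :
    HasWirtingerDerivAt (fun ζ => (Twist d a w ζ : ℂ))
      (I * (-Acoef d a 1 0 z - conj (∑ j ∈ Icc 1 d, Acoef d a j 1 z * (w - z) ^ j)))
      (I * (∑ j ∈ Icc 1 d, Acoef d a j 1 z * (w - z) ^ j + conj (Acoef d a 1 0 z))) z := by
  have hG := hasWirtingerDerivAt_taylorSum d a w z
  convert (hG.sub hG.star).const_mul I using 1
  · funext ζ
    rw [sub_conj, Twist]
    push_cast
    linear_combination (-2 * (∑ j ∈ Icc 1 d, Acoef d a j 0 ζ * (w - ζ) ^ j).im : ℂ) * I_sq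
  · rw [map_neg, sub_neg_eq_add]

end Acoef

/-- For a real-valued polynomial `p` in `z` and `z̄`, the Wirtinger `z̄`-derivative of
the twist (with `w` fixed) satisfies
`∂T/∂z̄ (w,z) = i ∂p/∂z̄(z) + i ∑_{j≥1} (1/j!) ∂^{j+1}p/∂z^j∂z̄(z) (w-z)^j`, and it
is the complex conjugate of `∂T/∂z (w,z)` since `T` is real-valued. -/
theorem twist_deriv_zbar (d : ℕ) (a : ℕ → ℕ → ℂ)
    (hreal : ∀ m n, (starRingEnd ℂ) (a m n) = a n m) (z w : ℂ) :
    wDzbar (fun ζ => ((Twist d a w ζ : ℝ) : ℂ)) z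
      = Complex.I * Acoef d a 0 1 z
        + Complex.I * ∑ j ∈ Finset.Icc 1 d, Acoef d a j 1 z * (w - z) ^ j ∧
    wDzbar (fun ζ => ((Twist d a w ζ : ℝ) : ℂ)) z
      = (starRingEnd ℂ) (wDz (fun ζ => ((Twist d a w ζ : ℝ) : ℂ)) z) := by
  refine ⟨?_, wDzbar_eq_conj_wDz_of_conj_eq (fun ζ => conj_ofReal _) z⟩
  rw [(hasWirtingerDerivAt_twist d a w z).wDzbar_eq, conj_Acoef d a hreal]
  ring
end

section
/- With $\Lambda$ and $\mu$ defined from a subharmonic, nonharmonic polynomial $p$ as $\Lambda(z,\delta) = \sum_{j,k\ge 1}|A_{jk}(z)|\delta^{j+k}$ and $\mu(z,\delta) = \inf_{j,k\ge 1}(\delta/|A_{jk}(z)|)^{1/(j+k)}$, there are constants $c, C > 0$ depending only on the degree of $p$ such that $c\,\delta \le \Lambda(z, \mu(z,\delta)) \le C\,\delta$ for all $\delta > 0$ and all $z$ with some $A_{jk}(z) \neq 0$. -/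
open Finset Complex

/-! Each nonzero term `|A_{jk}| δ^{j+k}` of `Λ` equals `|δ|` exactly at the candidate
`(|δ|/|A_{jk}|)^{1/(j+k)}` for `μ` and is monotone in the radius, so at the infimum `μ(z,δ)`
every term is at most `|δ|` and the term realising the infimum equals `|δ|`. Hence
`|δ| ≤ Λ(z, μ(z,δ)) ≤ d² |δ|`, `d²` bounding the number of terms. -/

section RootBounds

variable {A x : ℝ} {n : ℕ}

lemma mul_rpow_one_div_pow_eq (hA : 0 < A) (hx : 0 ≤ x) (hn : n ≠ 0) :
    A * ((x / A) ^ (1 / (n : ℝ))) ^ n = x := by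
  rw [← Real.rpow_natCast, ← Real.rpow_mul (div_nonneg hx hA.le), one_div,
    inv_mul_cancel₀ (Nat.cast_ne_zero.mpr hn), Real.rpow_one, mul_div_cancel₀ _ hA.ne']

lemma mul_pow_le_of_le_rpow_one_div {μ : ℝ} (hA : 0 < A) (hx : 0 ≤ x) (hn : n ≠ 0)
    (hμ : 0 ≤ μ) (hμle : μ ≤ (x / A) ^ (1 / (n : ℝ))) : A * μ ^ n ≤ x :=
  calc A * μ ^ n ≤ A * ((x / A) ^ (1 / (n : ℝ))) ^ n := by gcongr
    _ = x := mul_rpow_one_div_pow_eq hA hx hn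

end RootBounds

section Coefficients

variable {d : ℕ} {a : ℕ → ℕ → ℂ} {j k : ℕ} {z : ℂ}

lemma Acoef_eq_zero_of_lt_left (hj : d < j) : Acoef d a j k z = 0 := by
  refine sum_eq_zero fun m hm => sum_eq_zero fun n _ => ?_
  rw [Nat.choose_eq_zero_of_lt ((Nat.lt_succ_iff.mp (mem_range.mp hm)).trans_lt hj)]
  simp

lemma Acoef_eq_zero_of_lt_right (hk : d < k) : Acoef d a j k z = 0 := by
  refine sum_eq_zero fun m _ => sum_eq_zero fun n hn => ?_
  rw [Nat.choose_eq_zero_of_lt ((Nat.lt_succ_iff.mp (mem_range.mp hn)).trans_lt hk)]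
  simp

lemma le_of_Acoef_ne_zero (h : Acoef d a j k z ≠ 0) : j ≤ d ∧ k ≤ d :=
  ⟨not_lt.mp fun hj => h (Acoef_eq_zero_of_lt_left hj),
    not_lt.mp fun hk => h (Acoef_eq_zero_of_lt_right hk)⟩

end Coefficients

section Mu

variable {d : ℕ} {a : ℕ → ℕ → ℂ} {z : ℂ} {δ : ℝ}

def muSet (d : ℕ) (a : ℕ → ℕ → ℂ) (z : ℂ) (δ : ℝ) : Set ℝ :=
  {x : ℝ | ∃ j k : ℕ, 1 ≤ j ∧ 1 ≤ k ∧ Acoef d a j k z ≠ 0 ∧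
    x = (|δ| / ‖Acoef d a j k z‖) ^ (1 / ((j : ℝ) + (k : ℝ)))}

lemma muF_eq_sInf_muSet : muF d a z δ = sInf (muSet d a z δ) := rfl

lemma muSet_finite : (muSet d a z δ).Finite := by
  refine ((Icc 1 d ×ˢ Icc 1 d).finite_toSet.image fun p : ℕ × ℕ =>
    (|δ| / ‖Acoef d a p.1 p.2 z‖) ^ (1 / ((p.1 : ℝ) + (p.2 : ℝ)))).subset ?_
  rintro x ⟨j, k, hj, hk, hA, rfl⟩
  obtain ⟨hjd, hkd⟩ := le_of_Acoef_ne_zero hA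
  exact ⟨(j, k), by simp [hj, hk, hjd, hkd], rfl⟩

lemma muF_nonneg : 0 ≤ muF d a z δ :=
  Real.sInf_nonneg <| by
    rintro x ⟨j, k, -, -, -, rfl⟩
    positivity

lemma norm_Acoef_mul_muF_pow_le {j k : ℕ} (hj : 1 ≤ j) (hk : 1 ≤ k) :
    ‖Acoef d a j k z‖ * muF d a z δ ^ (j + k) ≤ |δ| := by
  rcases eq_or_ne (Acoef d a j k z) 0 with hA | hA
  · simp [hA]
  have hmem : (|δ| / ‖Acoef d a j k z‖) ^ (1 / ((j : ℝ) + (k : ℝ))) ∈ muSet d a z δ :=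
    ⟨j, k, hj, hk, hA, rfl⟩
  refine mul_pow_le_of_le_rpow_one_div (norm_pos_iff.mpr hA) (abs_nonneg δ) (by omega)
    muF_nonneg ?_
  rw [Nat.cast_add]
  exact csInf_le muSet_finite.bddBelow hmem

lemma exists_norm_Acoef_mul_muF_pow_eq (hz : ∃ j k : ℕ, 1 ≤ j ∧ 1 ≤ k ∧ Acoef d a j k z ≠ 0) :
    ∃ j ∈ Icc 1 d, ∃ k ∈ Icc 1 d, ‖Acoef d a j k z‖ * muF d a z δ ^ (j + k) = |δ| := by
  have hne : (muSet d a z δ).Nonempty := by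
    obtain ⟨j, k, hj, hk, hA⟩ := hz
    exact ⟨_, j, k, hj, hk, hA, rfl⟩
  obtain ⟨j, k, hj, hk, hA, hμ⟩ := hne.csInf_mem muSet_finite
  obtain ⟨hjd, hkd⟩ := le_of_Acoef_ne_zero hA
  refine ⟨j, mem_Icc.mpr ⟨hj, hjd⟩, k, mem_Icc.mpr ⟨hk, hkd⟩, ?_⟩
  rw [muF_eq_sInf_muSet, hμ, ← Nat.cast_add]
  exact mul_rpow_one_div_pow_eq (norm_pos_iff.mpr hA) (abs_nonneg δ) (by omega)

lemma abs_le_Lam_muF (hz : ∃ j k : ℕ, 1 ≤ j ∧ 1 ≤ k ∧ Acoef d a j k z ≠ 0) :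
    |δ| ≤ Lam d a z (muF d a z δ) := by
  obtain ⟨j, hj, k, hk, hjk⟩ := exists_norm_Acoef_mul_muF_pow_eq (δ := δ) hz
  have hterm_nonneg : ∀ j k, 0 ≤ ‖Acoef d a j k z‖ * muF d a z δ ^ (j + k) :=
    fun _ _ => mul_nonneg (norm_nonneg _) (pow_nonneg muF_nonneg _)
  calc |δ| = ‖Acoef d a j k z‖ * muF d a z δ ^ (j + k) := hjk.symm
    _ ≤ ∑ k ∈ Icc 1 d, ‖Acoef d a j k z‖ * muF d a z δ ^ (j + k) :=
      single_le_sum (fun k _ => hterm_nonneg j k) hk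
    _ ≤ Lam d a z (muF d a z δ) :=
      single_le_sum (fun j _ => sum_nonneg fun k _ => hterm_nonneg j k) hj

lemma Lam_muF_le : Lam d a z (muF d a z δ) ≤ (d : ℝ) ^ 2 * |δ| :=
  calc Lam d a z (muF d a z δ) ≤ ∑ _j ∈ Icc 1 d, ∑ _k ∈ Icc 1 d, |δ| :=
        sum_le_sum fun _j hj => sum_le_sum fun _k hk =>
          norm_Acoef_mul_muF_pow_le (mem_Icc.mp hj).1 (mem_Icc.mp hk).1
    _ = (d : ℝ) ^ 2 * |δ| := by simp only [sum_const, Nat.card_Icc, Nat.add_sub_cancel, nsmul_eq_mul]; ring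

end Mu

/-- For a subharmonic, nonharmonic polynomial `p` of degree `d`,
`Λ(z, μ(z,δ)) ∼ δ` with constants depending only on `d`, for all `δ > 0` and all
`z` at which some coefficient `A_{jk}(z)` with `j,k ≥ 1` is nonzero. -/
theorem lam_mu_approx_inverse (d : ℕ) :
    ∃ c C : ℝ, 0 < c ∧ 0 < C ∧
      ∀ a : ℕ → ℕ → ℂ,
        (∀ m n, d < m + n → a m n = 0) →
        (∀ m n, (starRingEnd ℂ) (a m n) = a n m) →
        (∀ z : ℂ, 0 ≤ (Acoef d a 1 1 z).re) →
        (∃ z₀ : ℂ, Acoef d a 1 1 z₀ ≠ 0) →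
        ∀ z : ℂ, (∃ j k : ℕ, 1 ≤ j ∧ 1 ≤ k ∧ Acoef d a j k z ≠ 0) →
          ∀ δ : ℝ, 0 < δ →
            c * δ ≤ Lam d a z (muF d a z δ) ∧ Lam d a z (muF d a z δ) ≤ C * δ := by
  refine ⟨1, (d : ℝ) ^ 2 + 1, one_pos, by positivity, ?_⟩
  intro a _ _ _ _ z hz δ hδ
  have hδabs : |δ| = δ := abs_of_pos hδ
  refine ⟨?_, ?_⟩
  · simpa [hδabs] using abs_le_Lam_muF (δ := δ) hz
  · calc Lam d a z (muF d a z δ) ≤ (d : ℝ) ^ 2 * δ := Lam_muF_le.trans_eq (by rw [hδabs])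
      _ ≤ ((d : ℝ) ^ 2 + 1) * δ := by linarith
end

section
/- Let $p$ be a subharmonic nonharmonic polynomial, and suppose $\delta \ge |w - z|$. Then $\Lambda(z,\delta) \sim \Lambda(w,\delta)$: there are constants $c, C > 0$ depending only on $\deg p$ such that $c\,\Lambda(w,\delta) \le \Lambda(z,\delta) \le C\,\Lambda(w,\delta)$. -/
open Finset Complex

/-! Taylor expansion of the coefficients about `w` gives
`A_{jk}(z) = ∑_{s,t} C(j+s,j) C(k+t,k) A_{j+s,k+t}(w) (z-w)^s (z̄-w̄)^t`, and every index
`(j+s, k+t)` occurring here with nonzero coefficient is again one of the indices of `Λ`. So if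
`|z - w| ≤ δ`, each term `|A_{jk}(z)| δ^{j+k}` is at most a constant depending on `d` times
`Λ(w,δ)`; summing gives `Λ(z,δ) ≤ C_d Λ(w,δ)`, and the other inequality is the same bound with
`z` and `w` exchanged. -/

theorem choose_mul_pow_eq_sum {R : Type*} [CommRing R] {m N : ℕ} (hm : m ≤ N) (j : ℕ)
    (x y : R) :
    (m.choose j : R) * x ^ (m - j) = ∑ s ∈ range (N + 1),
      ((j + s).choose j : R) * (m.choose (j + s) : R) * y ^ (m - (j + s)) * (x - y) ^ s := by
  have hsub : range (m - j + 1) ⊆ range (N + 1) := range_subset_range.2 (by omega)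
  calc (m.choose j : R) * x ^ (m - j)
      = (m.choose j : R) * ((x - y) + y) ^ (m - j) := by rw [sub_add_cancel]
    _ = ∑ s ∈ range (N + 1),
          (m.choose j : R) * ((m - j).choose s : R) * y ^ (m - j - s) * (x - y) ^ s := by
        rw [add_pow, mul_sum, sum_subset hsub]
        · exact sum_congr rfl fun s _ => by ring
        · intro s _ hs
          rw [Nat.choose_eq_zero_of_lt (n := m - j) (k := s) (by simp at hs; omega)]
          simp
    _ = _ := sum_congr rfl fun s _ => by
        rw [Nat.sub_sub, ← Nat.cast_mul, ← Nat.cast_mul, mul_comm ((j + s).choose j),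
          Nat.choose_mul (Nat.le_add_right j s), Nat.add_sub_cancel_left]

theorem sum_comm_pairs {α β M : Type*} [AddCommMonoid M] (A : Finset α) (B : Finset β)
    (F : α → α → β → β → M) :
    ∑ m ∈ A, ∑ n ∈ A, ∑ s ∈ B, ∑ t ∈ B, F m n s t
      = ∑ s ∈ B, ∑ t ∈ B, ∑ m ∈ A, ∑ n ∈ A, F m n s t := by
  calc ∑ m ∈ A, ∑ n ∈ A, ∑ s ∈ B, ∑ t ∈ B, F m n s t
      = ∑ p ∈ A ×ˢ A, ∑ q ∈ B ×ˢ B, F p.1 p.2 q.1 q.2 := by simp only [sum_product]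
    _ = ∑ q ∈ B ×ˢ B, ∑ p ∈ A ×ˢ A, F p.1 p.2 q.1 q.2 := sum_comm
    _ = _ := by simp only [sum_product]

theorem Acoef_eq_sum_taylor (d : ℕ) (a : ℕ → ℕ → ℂ) (j k : ℕ) (z w : ℂ) :
    Acoef d a j k z = ∑ s ∈ range (d + 1), ∑ t ∈ range (d + 1),
      ((j + s).choose j : ℂ) * ((k + t).choose k : ℂ) * Acoef d a (j + s) (k + t) w
        * (z - w) ^ s * (starRingEnd ℂ (z - w)) ^ t := by
  calc Acoef d a j k z
      = ∑ m ∈ range (d + 1), ∑ n ∈ range (d + 1),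
          ((m.choose j : ℂ) * z ^ (m - j)) * ((n.choose k : ℂ) * (starRingEnd ℂ z) ^ (n - k))
            * a m n :=
        sum_congr rfl fun m _ => sum_congr rfl fun n _ => by ring
    _ = ∑ m ∈ range (d + 1), ∑ n ∈ range (d + 1), ∑ s ∈ range (d + 1), ∑ t ∈ range (d + 1),
          (((j + s).choose j : ℂ) * (m.choose (j + s) : ℂ) * w ^ (m - (j + s)) * (z - w) ^ s)
            * (((k + t).choose k : ℂ) * (n.choose (k + t) : ℂ)
              * (starRingEnd ℂ w) ^ (n - (k + t)) * (starRingEnd ℂ (z - w)) ^ t) * a m n := by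
        refine sum_congr rfl fun m hm => sum_congr rfl fun n hn => ?_
        rw [choose_mul_pow_eq_sum (Nat.le_of_lt_succ (mem_range.1 hm)) j z w,
          choose_mul_pow_eq_sum (Nat.le_of_lt_succ (mem_range.1 hn)) k _ (starRingEnd ℂ w),
          map_sub, sum_mul_sum, sum_mul]
        simp only [sum_mul]
    _ = _ := by
        rw [sum_comm_pairs]
        simp only [Acoef, mul_sum, sum_mul]
        exact sum_congr rfl fun s _ => sum_congr rfl fun t _ =>
          sum_congr rfl fun m _ => sum_congr rfl fun n _ => by ring

theorem Acoef_eq_zero_of_lt_s10 {d J K : ℕ} (a : ℕ → ℕ → ℂ) (h : d < J ∨ d < K) (w : ℂ) :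
    Acoef d a J K w = 0 :=
  sum_eq_zero fun m hm => sum_eq_zero fun n hn => by
    rw [mem_range] at hm hn
    rcases h with hJ | hK
    · rw [Nat.choose_eq_zero_of_lt (n := m) (by omega)]; simp
    · rw [Nat.choose_eq_zero_of_lt (n := n) (by omega)]; simp

theorem Lam_nonneg (d : ℕ) (a : ℕ → ℕ → ℂ) (w : ℂ) {δ : ℝ} (hδ : 0 ≤ δ) :
    0 ≤ Lam d a w δ :=
  sum_nonneg fun _ _ => sum_nonneg fun _ _ => by positivity

theorem norm_Acoef_mul_pow_le_Lam (d : ℕ) (a : ℕ → ℕ → ℂ) (w : ℂ) {δ : ℝ} (hδ : 0 ≤ δ)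
    {J K : ℕ} (hJ : 1 ≤ J) (hK : 1 ≤ K) :
    ‖Acoef d a J K w‖ * δ ^ (J + K) ≤ Lam d a w δ := by
  by_cases hJK : J ≤ d ∧ K ≤ d
  · have hrow : ‖Acoef d a J K w‖ * δ ^ (J + K)
        ≤ ∑ k ∈ Icc 1 d, ‖Acoef d a J k w‖ * δ ^ (J + k) :=
      single_le_sum (f := fun k => ‖Acoef d a J k w‖ * δ ^ (J + k))
        (fun _ _ => by positivity) (mem_Icc.2 ⟨hK, hJK.2⟩)
    exact hrow.trans <| single_le_sum
      (f := fun j => ∑ k ∈ Icc 1 d, ‖Acoef d a j k w‖ * δ ^ (j + k))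
      (fun _ _ => sum_nonneg fun _ _ => by positivity) (mem_Icc.2 ⟨hJ, hJK.1⟩)
  · rw [Acoef_eq_zero_of_lt_s10 a (by omega), norm_zero, zero_mul]
    exact Lam_nonneg d a w hδ

theorem choose_add_le_four_pow {d j s : ℕ} (hj : j ≤ d) (hs : s ≤ d) :
    ((j + s).choose j : ℝ) ≤ 4 ^ d := by
  calc ((j + s).choose j : ℝ) ≤ 2 ^ (j + s) := by exact_mod_cast Nat.choose_le_two_pow _ _
    _ ≤ 2 ^ (2 * d) := pow_le_pow_right₀ one_le_two (by omega)
    _ = 4 ^ d := by rw [pow_mul]; norm_num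

theorem norm_Acoef_mul_pow_le (d : ℕ) (a : ℕ → ℕ → ℂ) {z w : ℂ} {δ : ℝ} (h : ‖z - w‖ ≤ δ)
    {j k : ℕ} (hj : j ∈ Icc 1 d) (hk : k ∈ Icc 1 d) :
    ‖Acoef d a j k z‖ * δ ^ (j + k) ≤ ((d : ℝ) + 1) ^ 2 * 16 ^ d * Lam d a w δ := by
  have hδ : 0 ≤ δ := (norm_nonneg _).trans h
  rw [mem_Icc] at hj hk
  have hterm : ∀ s ∈ range (d + 1), ∀ t ∈ range (d + 1),
      ‖((j + s).choose j : ℂ) * ((k + t).choose k : ℂ) * Acoef d a (j + s) (k + t) w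
        * (z - w) ^ s * (starRingEnd ℂ (z - w)) ^ t‖ * δ ^ (j + k)
        ≤ 16 ^ d * Lam d a w δ := by
    intro s hs t ht
    rw [mem_range] at hs ht
    have hJK := norm_Acoef_mul_pow_le_Lam d a w hδ (J := j + s) (K := k + t) (by omega) (by omega)
    have hzw : ∀ n, ‖z - w‖ ^ n ≤ δ ^ n := fun n => pow_le_pow_left₀ (norm_nonneg _) h n
    simp only [norm_mul, norm_pow, Complex.norm_natCast, Complex.norm_conj]
    calc ((j + s).choose j : ℝ) * (k + t).choose k * ‖Acoef d a (j + s) (k + t) w‖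
          * ‖z - w‖ ^ s * ‖z - w‖ ^ t * δ ^ (j + k)
        ≤ 4 ^ d * 4 ^ d * ‖Acoef d a (j + s) (k + t) w‖ * δ ^ s * δ ^ t * δ ^ (j + k) := by
          gcongr
          exacts [choose_add_le_four_pow (by omega) (by omega),
            choose_add_le_four_pow (by omega) (by omega)]
      _ = 16 ^ d * (‖Acoef d a (j + s) (k + t) w‖ * δ ^ (j + s + (k + t))) := by
          rw [show (16 : ℝ) ^ d = 4 ^ d * 4 ^ d by rw [← mul_pow]; norm_num]
          ring
      _ ≤ 16 ^ d * Lam d a w δ := by gcongr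
  calc ‖Acoef d a j k z‖ * δ ^ (j + k)
      ≤ (∑ s ∈ range (d + 1), ∑ t ∈ range (d + 1),
          ‖((j + s).choose j : ℂ) * ((k + t).choose k : ℂ) * Acoef d a (j + s) (k + t) w
            * (z - w) ^ s * (starRingEnd ℂ (z - w)) ^ t‖) * δ ^ (j + k) := by
        rw [Acoef_eq_sum_taylor d a j k z w]
        gcongr
        exact (norm_sum_le _ _).trans (sum_le_sum fun s _ => norm_sum_le _ _)
    _ ≤ ∑ s ∈ range (d + 1), ∑ t ∈ range (d + 1), 16 ^ d * Lam d a w δ := by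
        simp only [sum_mul]
        exact sum_le_sum fun s hs => sum_le_sum fun t ht => hterm s hs t ht
    _ = ((d : ℝ) + 1) ^ 2 * 16 ^ d * Lam d a w δ := by
        simp only [sum_const, card_range, nsmul_eq_mul]
        push_cast
        ring

theorem Lam_le (d : ℕ) (a : ℕ → ℕ → ℂ) {z w : ℂ} {δ : ℝ} (h : ‖z - w‖ ≤ δ) :
    Lam d a z δ ≤ ((d : ℝ) + 1) ^ 4 * 16 ^ d * Lam d a w δ := by
  have hLw : 0 ≤ Lam d a w δ := Lam_nonneg d a w ((norm_nonneg _).trans h)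
  calc Lam d a z δ
      ≤ ∑ j ∈ Icc 1 d, ∑ k ∈ Icc 1 d, ((d : ℝ) + 1) ^ 2 * 16 ^ d * Lam d a w δ :=
        sum_le_sum fun j hj => sum_le_sum fun k hk => norm_Acoef_mul_pow_le d a h hj hk
    _ = (d : ℝ) ^ 2 * (((d : ℝ) + 1) ^ 2 * 16 ^ d * Lam d a w δ) := by
        simp only [sum_const, Nat.card_Icc, Nat.add_sub_cancel, nsmul_eq_mul]
        ring
    _ ≤ ((d : ℝ) + 1) ^ 2 * (((d : ℝ) + 1) ^ 2 * 16 ^ d * Lam d a w δ) := by gcongr; linarith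
    _ = ((d : ℝ) + 1) ^ 4 * 16 ^ d * Lam d a w δ := by ring

/-- For a subharmonic, nonharmonic polynomial `p` of degree `d`, if `δ ≥ |w - z|`
then `Λ(z,δ) ∼ Λ(w,δ)` with constants depending only on `d`. -/
theorem lam_comparable (d : ℕ) :
    ∃ c C : ℝ, 0 < c ∧ 0 < C ∧
      ∀ a : ℕ → ℕ → ℂ,
        (∀ m n, d < m + n → a m n = 0) →
        (∀ m n, (starRingEnd ℂ) (a m n) = a n m) →
        (∀ z : ℂ, 0 ≤ (Acoef d a 1 1 z).re) →
        (∃ z₀ : ℂ, Acoef d a 1 1 z₀ ≠ 0) →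
        ∀ (z w : ℂ) (δ : ℝ), ‖w - z‖ ≤ δ →
          c * Lam d a w δ ≤ Lam d a z δ ∧ Lam d a z δ ≤ C * Lam d a w δ := by
  have hC : 0 < ((d : ℝ) + 1) ^ 4 * 16 ^ d := by positivity
  refine ⟨(((d : ℝ) + 1) ^ 4 * 16 ^ d)⁻¹, ((d : ℝ) + 1) ^ 4 * 16 ^ d, inv_pos.2 hC, hC, ?_⟩
  intro a _ _ _ _ z w δ hwz
  refine ⟨?_, Lam_le d a (by rwa [norm_sub_rev])⟩
  rw [inv_mul_le_iff₀ hC]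
  exact Lam_le d a hwz
end

section
/- Let $f: \mathbb{R} \to \mathbb{C}$ be smooth with $|f(t)| \le \frac{A}{B + |t|}$ and $|f'(t)| \le \frac{A}{B^2 + t^2}$ for some constants $A, B > 0$, and let $\tau \ne 0$ with $|\tau| \le 1/B$. Then for every $R \ge 1/|\tau|$, $\left|\int_{-R}^{R} e^{-i\tau t} f(t)\,dt\right| \le C\,A\left(1 + \log\frac{1}{|\tau| B}\right)$ for an absolute constant $C$ independent of $R$, $\tau$, $A$, $B$. -/
open intervalIntegral MeasureTheory

lemma osc_abs_exp (τ t : ℝ) : ‖Complex.exp (-(Complex.I * τ * t))‖ = 1 := by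
  rw [Complex.norm_exp]
  simp [Complex.mul_re]

lemma osc_hasDerivAt_G (τ : ℝ) (hτ : τ ≠ 0) (t : ℝ) :
    HasDerivAt (fun s : ℝ => (Complex.I / τ) * Complex.exp (-(Complex.I * τ * s)))
      (Complex.exp (-(Complex.I * τ * t))) t := by
  have hlin : HasDerivAt (fun s : ℝ => -(Complex.I * τ) * (s : ℂ)) (-(Complex.I * τ)) t := by
    simpa using ((hasDerivAt_id (t : ℂ)).const_mul (-(Complex.I * τ))).comp_ofReal
  have h2 : HasDerivAt (fun s : ℝ => Complex.exp (-(Complex.I * τ) * s))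
      (Complex.exp (-(Complex.I * τ) * (t : ℂ)) * -(Complex.I * τ)) t := hlin.cexp
  have h3 := h2.const_mul (Complex.I / τ)
  have hττ : (τ : ℂ) ≠ 0 := Complex.ofReal_ne_zero.mpr hτ
  have key : (Complex.I / τ) * (Complex.exp (-(Complex.I * τ) * (t : ℂ)) * -(Complex.I * τ))
      = Complex.exp (-(Complex.I * τ * t)) := by
    rw [show -(Complex.I * (τ:ℂ) * (t:ℂ)) = -(Complex.I * τ) * t by ring]
    have h4 : (Complex.I / τ) * -(Complex.I * τ) = 1 := by
      field_simp
      rw [Complex.I_sq]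
      ring
    rw [mul_comm (Complex.exp _), ← mul_assoc, h4, one_mul]
  rw [key] at h3
  convert h3 using 2 with s
  · rfl
  ring_nf

lemma osc_tail_bound (f : ℝ → ℂ) (A B τ a b : ℝ) (hf : ContDiff ℝ (⊤ : ℕ∞) f) (hA : 0 < A) (hB : 0 < B)
    (hfb : ∀ t : ℝ, ‖f t‖ ≤ A / (B + |t|))
    (hfb' : ∀ t : ℝ, ‖deriv f t‖ ≤ A / (B ^ 2 + t ^ 2))
    (hτ : τ ≠ 0) (hab : a ≤ b) (hmin : ∀ t ∈ Set.Icc a b, 1 / |τ| ≤ |t|) :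
    ‖∫ t in a..b, Complex.exp (-(Complex.I * τ * t)) * f t‖ ≤ 3 * A := by
  have hτ' : 0 < |τ| := abs_pos.mpr hτ
  set G : ℝ → ℂ := fun s => (Complex.I / τ) * Complex.exp (-(Complex.I * τ * s)) with hG
  have hGabs : ∀ s : ℝ, ‖G s‖ = 1 / |τ| := by
    intro s
    rw [hG]
    simp only [norm_mul, norm_div, Complex.norm_I, Complex.norm_real, Real.norm_eq_abs, osc_abs_exp]
    ring
  have hfd : Differentiable ℝ f := hf.differentiable (by simp)
  have hf'c : Continuous (deriv f) := hf.continuous_deriv (by simp)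
  have hec : Continuous (fun s : ℝ => Complex.exp (-(Complex.I * τ * s))) := by
    fun_prop
  have hGc : Continuous G := by fun_prop
  -- integration by parts
  have hibp : ∫ t in a..b, f t * Complex.exp (-(Complex.I * τ * t))
      = f b * G b - f a * G a - ∫ t in a..b, deriv f t * G t := by
    exact intervalIntegral.integral_mul_deriv_eq_deriv_mul
      (fun x _ => (hfd x).hasDerivAt)
      (fun x _ => osc_hasDerivAt_G τ hτ x)
      (hf'c.intervalIntegrable a b) (hec.intervalIntegrable a b)
  have hcomm : (∫ t in a..b, Complex.exp (-(Complex.I * τ * t)) * f t)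
      = ∫ t in a..b, f t * Complex.exp (-(Complex.I * τ * t)) := by
    simp [mul_comm]
  -- boundary bounds
  have hbd : ∀ s : ℝ, s ∈ Set.Icc a b → ‖f s * G s‖ ≤ A := by
    intro s hs
    have hs0 : 0 < |s| := lt_of_lt_of_le (by positivity) (hmin s hs)
    rw [norm_mul, hGabs]
    calc ‖f s‖ * (1 / |τ|) ≤ (A / (B + |s|)) * (1 / |τ|) := by
          apply mul_le_mul_of_nonneg_right (hfb s) (by positivity)
      _ ≤ (A / |s|) * (1 / |τ|) := by
          apply mul_le_mul_of_nonneg_right _ (by positivity)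
          apply div_le_div_of_nonneg_left hA.le hs0 (by linarith)
      _ ≤ (A / (1 / |τ|)) * (1 / |τ|) := by
          apply mul_le_mul_of_nonneg_right _ (by positivity)
          exact div_le_div_of_nonneg_left hA.le (one_div_pos.mpr hτ') (hmin s hs)
      _ = A := by field_simp
  -- integral of derivative term
  have h0 : (0 : ℝ) ∉ Set.Icc a b := by
    intro h0
    have h := hmin 0 h0
    rw [abs_zero] at h
    have : (0:ℝ) < 1 / |τ| := one_div_pos.mpr hτ'
    linarith
  have hne : ∀ x ∈ Set.uIcc a b, x ≠ 0 := by
    intro x hx hx0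
    rw [Set.uIcc_of_le hab] at hx
    exact h0 (hx0 ▸ hx)
  have hsq : ∫ x in a..b, (x ^ 2)⁻¹ = a⁻¹ - b⁻¹ := by
    have := intervalIntegral.integral_eq_sub_of_hasDerivAt (f := fun x : ℝ => -x⁻¹)
      (f' := fun x : ℝ => (x ^ 2)⁻¹) (a := a) (b := b)
      (fun x hx => by have := (hasDerivAt_inv (hne x hx)).neg; simp at this; exact this)
      (ContinuousOn.intervalIntegrable (by
        apply ContinuousOn.inv₀ (by fun_prop)
        intro x hx
        exact pow_ne_zero 2 (hne x hx)))
    rw [this]; ring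
  have hsqle : a⁻¹ - b⁻¹ ≤ |τ| := by
    rcases lt_or_ge 0 a with hpa | hpa
    · have hb0 : 0 < b := lt_of_lt_of_le hpa hab
      have ha' : 1 / |τ| ≤ a := by
        have := hmin a ⟨le_refl a, hab⟩
        rwa [abs_of_pos hpa] at this
      have : a⁻¹ ≤ |τ| := by
        rw [inv_le_comm₀ hpa hτ']
        simpa [one_div] using ha'
      have : (0:ℝ) < b⁻¹ := by positivity
      linarith
    · have hbn : b < 0 := by
        by_contra h
        push_neg at h
        exact h0 ⟨hpa, h⟩
      have hb' : 1 / |τ| ≤ -b := by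
        have := hmin b ⟨hab, le_refl b⟩
        rwa [abs_of_neg hbn] at this
      have h1 : -b⁻¹ ≤ |τ| := by
        rw [← inv_neg, inv_le_comm₀ (neg_pos.mpr hbn) hτ']
        simpa [one_div] using hb'
      have han : a < 0 := lt_of_le_of_lt hab hbn
      have : a⁻¹ < 0 := inv_neg''.mpr han
      linarith
  have hderivint : ‖∫ t in a..b, deriv f t * G t‖ ≤ A := by
    calc ‖∫ t in a..b, deriv f t * G t‖
        ≤ ∫ t in a..b, ‖deriv f t * G t‖ := by
          simpa using
            intervalIntegral.norm_integral_le_integral_norm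
              (f := fun t => deriv f t * G t) (μ := volume) hab
      _ ≤ ∫ t in a..b, (A / |τ|) * (t ^ 2)⁻¹ := by
          apply intervalIntegral.integral_mono_on hab
          · exact ((continuous_norm.comp (hf'c.mul hGc))).intervalIntegrable a b
          · apply ContinuousOn.intervalIntegrable
            apply ContinuousOn.mul continuousOn_const
            apply ContinuousOn.inv₀ (by fun_prop)
            intro x hx
            exact pow_ne_zero 2 (hne x hx)
          · intro x hx
            have hx0 : x ≠ 0 := fun h => h0 (h ▸ hx)
            rw [norm_mul, hGabs]
            calc ‖deriv f x‖ * (1 / |τ|)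
                ≤ (A / (B ^ 2 + x ^ 2)) * (1 / |τ|) :=
                  mul_le_mul_of_nonneg_right (hfb' x) (by positivity)
              _ ≤ (A / x ^ 2) * (1 / |τ|) := by
                  apply mul_le_mul_of_nonneg_right _ (by positivity)
                  apply div_le_div_of_nonneg_left hA.le (pow_two_pos_of_ne_zero hx0) (by nlinarith)
              _ = (A / |τ|) * (x ^ 2)⁻¹ := by
                  rw [div_eq_mul_inv, div_eq_mul_inv, div_eq_mul_inv]; ring
      _ = (A / |τ|) * ∫ t in a..b, (t ^ 2)⁻¹ := by
          rw [← intervalIntegral.integral_const_mul]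
      _ = (A / |τ|) * (a⁻¹ - b⁻¹) := by rw [hsq]
      _ ≤ (A / |τ|) * |τ| := by
          apply mul_le_mul_of_nonneg_left hsqle (by positivity)
      _ = A := by field_simp
  rw [hcomm, hibp]
  have key : ∀ x y z : ℂ, ‖x - y - z‖
      ≤ ‖x‖ + ‖y‖ + ‖z‖ := by
    intro x y z
    have h1 := norm_sub_le (x - y) z
    have h2 := norm_sub_le x y
    linarith
  have h1 := hbd b ⟨hab, le_refl b⟩
  have h2 := hbd a ⟨le_refl a, hab⟩
  have h3 := key (f b * G b) (f a * G a) (∫ t in a..b, deriv f t * G t)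
  linarith

lemma osc_mid_bound (f : ℝ → ℂ) (A B S : ℝ) (τ : ℝ) (hf : ContDiff ℝ (⊤ : ℕ∞) f) (hA : 0 < A)
    (hB : 0 < B) (hS : 0 < S)
    (hfb : ∀ t : ℝ, ‖f t‖ ≤ A / (B + |t|)) :
    ‖∫ t in (-S)..S, Complex.exp (-(Complex.I * τ * t)) * f t‖
      ≤ 2 * A * Real.log ((B + S) / B) := by
  have hec : Continuous (fun s : ℝ => Complex.exp (-(Complex.I * τ * s))) := by fun_prop
  have hbc : Continuous (fun t : ℝ => A / (B + |t|)) := by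
    apply continuous_const.div (by fun_prop)
    intro x
    positivity
  calc ‖∫ t in (-S)..S, Complex.exp (-(Complex.I * τ * t)) * f t‖
      ≤ ∫ t in (-S)..S, ‖Complex.exp (-(Complex.I * τ * t)) * f t‖ := by
        simpa using
          intervalIntegral.norm_integral_le_integral_norm
            (f := fun t : ℝ => Complex.exp (-(Complex.I * τ * t)) * f t)
            (μ := MeasureTheory.volume) (by linarith : -S ≤ S)
    _ ≤ ∫ t in (-S)..S, A / (B + |t|) := by
        apply intervalIntegral.integral_mono_on (by linarith)
        · exact (continuous_norm.comp (hec.mul hf.continuous)).intervalIntegrable _ _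
        · exact hbc.intervalIntegrable _ _
        · intro x _
          rw [norm_mul, osc_abs_exp, one_mul]
          exact hfb x
    _ = (∫ t in (-S)..(0:ℝ), A / (B + |t|)) + ∫ t in (0:ℝ)..S, A / (B + |t|) := by
        rw [intervalIntegral.integral_add_adjacent_intervals
          (hbc.intervalIntegrable _ _) (hbc.intervalIntegrable _ _)]
    _ = 2 * ∫ t in (0:ℝ)..S, A / (B + |t|) := by
        have h := intervalIntegral.integral_comp_neg (a := (0:ℝ)) (b := S)
          (fun t => A / (B + |t|))
        simp only [abs_neg, neg_zero] at h
        rw [← h]; ring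
    _ = 2 * ∫ t in (0:ℝ)..S, A / (B + t) := by
        congr 1
        apply intervalIntegral.integral_congr
        intro x hx
        rw [Set.uIcc_of_le hS.le] at hx
        simp [abs_of_nonneg hx.1]
    _ = 2 * (A * ∫ t in (0:ℝ)..S, (B + t)⁻¹) := by
        congr 1
        rw [← intervalIntegral.integral_const_mul]
        apply intervalIntegral.integral_congr
        intro x _
        simp [div_eq_mul_inv]
    _ = 2 * A * Real.log ((B + S) / B) := by
        rw [intervalIntegral.integral_comp_add_left (fun x => x⁻¹) B, add_zero,
          integral_inv_of_pos hB (by positivity)]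
        ring_nf



/-- Oscillatory-integral estimate: if `f : ℝ → ℂ` is smooth with
`|f(t)| ≤ A/(B+|t|)` and `|f'(t)| ≤ A/(B²+t²)`, and `τ ≠ 0` with `|τ| ≤ 1/B`,
then for every `R ≥ 1/|τ|`,
`|∫_{-R}^R e^{-iτt} f(t) dt| ≤ C A (1 + log(1/(|τ|B)))` for an absolute constant
`C` independent of `R`, `τ`, `A`, `B`. -/
theorem oscillatory_log_bound :
    ∃ C : ℝ, 0 < C ∧
      ∀ (f : ℝ → ℂ) (A B τ R : ℝ),
        ContDiff ℝ (⊤ : ℕ∞) f → 0 < A → 0 < B →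
        (∀ t : ℝ, ‖f t‖ ≤ A / (B + |t|)) →
        (∀ t : ℝ, ‖deriv f t‖ ≤ A / (B ^ 2 + t ^ 2)) →
        τ ≠ 0 → |τ| ≤ 1 / B → 1 / |τ| ≤ R →
        ‖∫ t in (-R)..R, Complex.exp (-(Complex.I * τ * t)) * f t‖
          ≤ C * A * (1 + Real.log (1 / (|τ| * B))) := by
  refine ⟨10, by norm_num, ?_⟩
  intro f A B τ R hf hA hB hfb hfb' hτ hτB hR
  have hτ' : 0 < |τ| := abs_pos.mpr hτ
  set S : ℝ := 1 / |τ| with hSdef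
  have hS0 : 0 < S := by positivity
  have hτB1 : |τ| * B ≤ 1 := by
    have := mul_le_mul_of_nonneg_right hτB hB.le
    rwa [one_div, inv_mul_cancel₀ hB.ne'] at this
  have hBS : B ≤ S := by
    rw [hSdef, le_div_iff₀ hτ']
    linarith [hτB1, mul_comm B |τ|]
  have hL : 0 ≤ Real.log (1 / (|τ| * B)) := by
    apply Real.log_nonneg
    rw [le_div_iff₀ (by positivity)]
    linarith
  have hec : Continuous (fun s : ℝ => Complex.exp (-(Complex.I * τ * s))) := by fun_prop
  have hi : ∀ a b : ℝ, IntervalIntegrable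
      (fun t : ℝ => Complex.exp (-(Complex.I * τ * t)) * f t) MeasureTheory.volume a b :=
    fun a b => (hec.mul hf.continuous).intervalIntegrable a b
  have e2 := intervalIntegral.integral_add_adjacent_intervals (hi (-S) S) (hi S R)
  have e1 := intervalIntegral.integral_add_adjacent_intervals (hi (-R) (-S))
    ((hi (-S) S).trans (hi S R))
  rw [← e1, ← e2]
  have htail1 : ‖∫ t in (-R)..(-S),
      Complex.exp (-(Complex.I * τ * t)) * f t‖ ≤ 3 * A := by
    apply osc_tail_bound f A B τ (-R) (-S) hf hA hB hfb hfb' hτ (by linarith)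
    intro t ht
    rw [hSdef] at *
    calc 1 / |τ| ≤ -t := by linarith [ht.2]
      _ ≤ |t| := neg_le_abs t
  have htail2 : ‖∫ t in S..R,
      Complex.exp (-(Complex.I * τ * t)) * f t‖ ≤ 3 * A := by
    apply osc_tail_bound f A B τ S R hf hA hB hfb hfb' hτ hR
    intro t ht
    calc (1:ℝ) / |τ| ≤ t := ht.1
      _ ≤ |t| := le_abs_self t
  have hmid := osc_mid_bound f A B S τ hf hA hB hS0 hfb
  have hlog : Real.log ((B + S) / B) ≤ Real.log 2 + Real.log (1 / (|τ| * B)) := by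
    have hSB : S / B = 1 / (|τ| * B) := by
      rw [hSdef, div_div]
    calc Real.log ((B + S) / B) ≤ Real.log (2 * (S / B)) := by
          apply Real.log_le_log (by positivity)
          rw [div_le_iff₀ hB]
          calc B + S ≤ S + S := by linarith
            _ = 2 * (S / B) * B := by field_simp; ring
      _ = Real.log 2 + Real.log (S / B) := by
          rw [Real.log_mul (by norm_num) (by positivity)]
      _ = Real.log 2 + Real.log (1 / (|τ| * B)) := by rw [hSB]
  have hlog2 : Real.log 2 ≤ 1 := by
    have := Real.log_le_sub_one_of_pos (by norm_num : (0:ℝ) < 2)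
    linarith
  have htri : ∀ x y z : ℂ, ‖x + (y + z)‖
      ≤ ‖x‖ + ‖y‖ + ‖z‖ := by
    intro x y z
    have h1 := norm_add_le x (y + z)
    have h2 := norm_add_le y z
    linarith
  have h := htri (∫ t in (-R)..(-S), Complex.exp (-(Complex.I * τ * t)) * f t)
    (∫ t in (-S)..S, Complex.exp (-(Complex.I * τ * t)) * f t)
    (∫ t in S..R, Complex.exp (-(Complex.I * τ * t)) * f t)
  have hmid' : ‖∫ t in (-S)..S, Complex.exp (-(Complex.I * τ * t)) * f t‖
      ≤ 2 * A * (Real.log 2 + Real.log (1 / (|τ| * B))) := by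
    calc ‖∫ t in (-S)..S, Complex.exp (-(Complex.I * τ * t)) * f t‖
        ≤ 2 * A * Real.log ((B + S) / B) := hmid
      _ ≤ 2 * A * (Real.log 2 + Real.log (1 / (|τ| * B))) := by
          apply mul_le_mul_of_nonneg_left hlog (by positivity)
  nlinarith [mul_nonneg hA.le hL]
end
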